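/- arXiv:1205.3605 — 2 statements merged into one kernel-verified Lean document; each statement's English description precedes it below -/
import Mathlib

section
/- Let G be a finite undirected graph with edge costs c : E(G) → ℝ≥0, let R ⊆ V(G), and let ρ ≥ 1 be a real number. If S is a Steiner tree for R whose cost satisfies c(S) ≤ ρ·c(S') for every Steiner tree S' for R, then for every Steiner tree S'' for R one has p(S) ≤ 2ρ·p(S''). In particular, a ρ-approximate minimum-cost Steiner tree is a 2ρ-approximate minimum-power Steiner tree. -/
/-!
Charging every edge to both of its endpoints shows that the power of any edge set is at most
twice its cost. Conversely, in a forest, root every component and charge each edge to its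
endpoint farther from the root: a vertex has at most one neighbour closer to the root, so this
charging is injective and the cost is at most the power. Hence
`p(S) ≤ 2 c(S) ≤ 2ρ c(S'') ≤ 2ρ p(S'')`.
-/

open scoped NNReal

/-- The power of a vertex `v` w.r.t. an edge set `E` with costs `c`: the maximum cost of an
edge of `E` incident to `v` (`0` if `v` has no incident edge, since `sSup ∅ = 0` in `ℝ≥0`). -/
noncomputable def vertexPower {V : Type*} (c : Sym2 V → ℝ≥0) (E : Set (Sym2 V)) (v : V) : ℝ≥0 :=
  sSup (c '' {f | f ∈ E ∧ v ∈ f})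

/-- The power of an edge set `E`: the sum of the powers of all vertices (vertices not
touched by `E` contribute `0`). -/
noncomputable def setPower {V : Type*} (c : Sym2 V → ℝ≥0) (E : Set (Sym2 V)) : ℝ≥0 :=
  ∑ᶠ v : V, vertexPower c E v

/-- The cost of an edge set `E`: the sum of the costs of its edges. -/
noncomputable def setCost {V : Type*} (c : Sym2 V → ℝ≥0) (E : Set (Sym2 V)) : ℝ≥0 :=
  ∑ᶠ f ∈ E, c f

/-- A Steiner tree for terminal set `R` in `G`: a subgraph of `G` which is a tree and whose
vertex set contains `R`. -/
def IsSteinerTree {V : Type*} (G : SimpleGraph V) (R : Set V) (S : G.Subgraph) : Prop :=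
  S.coe.IsTree ∧ R ⊆ S.verts

open scoped Finset

open Function SimpleGraph

section Power

variable {V W : Type*} (c : Sym2 V → ℝ≥0) {E : Set (Sym2 V)}

lemma vertexPower_le {v : V} {a : ℝ≥0} (h : ∀ e ∈ E, v ∈ e → c e ≤ a) :
    vertexPower c E v ≤ a :=
  csSup_le' <| by rintro _ ⟨e, ⟨he, hv⟩, rfl⟩; exact h e he hv

lemma le_vertexPower [Finite V] {e : Sym2 V} {v : V} (he : e ∈ E) (hv : v ∈ e) :
    c e ≤ vertexPower c E v :=
  le_csSup (Set.toFinite _).bddAbove ⟨e, ⟨he, hv⟩, rfl⟩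

lemma vertexPower_image_sym2Map {f : W → V} (hf : Injective f) (E : Set (Sym2 W)) (w : W) :
    vertexPower c (Sym2.map f '' E) (f w) = vertexPower (c ∘ Sym2.map f) E w := by
  have hmem : ∀ e : Sym2 W, f w ∈ Sym2.map f e ↔ w ∈ e := fun e => by
    simp only [Sym2.mem_map, hf.eq_iff, exists_eq_right]
  rw [vertexPower, vertexPower, Set.image_comp]
  congr 1
  ext e
  simp only [Set.mem_image, Set.mem_ofPred_eq]
  grind

lemma vertexPower_image_sym2Map_of_notMem_range {f : W → V} (E : Set (Sym2 W)) {v : V}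
    (hv : v ∉ Set.range f) : vertexPower c (Sym2.map f '' E) v = 0 :=
  le_antisymm (vertexPower_le c <| by
    rintro _ ⟨e, -, rfl⟩ hve
    obtain ⟨w, -, rfl⟩ := Sym2.mem_map.1 hve
    exact absurd ⟨w, rfl⟩ hv) zero_le

lemma setCost_image_sym2Map {f : W → V} (hf : Injective f) (E : Set (Sym2 W)) :
    setCost c (Sym2.map f '' E) = setCost (c ∘ Sym2.map f) E :=
  finsum_mem_image (Sym2.map.injective hf).injOn

lemma setPower_image_sym2Map {f : W → V} (hf : Injective f) (E : Set (Sym2 W)) :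
    setPower c (Sym2.map f '' E) = setPower (c ∘ Sym2.map f) E := by
  simp only [setPower, ← vertexPower_image_sym2Map c hf]
  rw [← finsum_mem_range hf, ← finsum_mem_univ]
  refine finsum_mem_inter_support_eq' _ _ _ fun v hv => iff_of_true trivial ?_
  by_contra hv'
  exact hv (vertexPower_image_sym2Map_of_notMem_range c E hv')

lemma setPower_le_two_mul_setCost [Finite V] (E : Set (Sym2 V)) :
    setPower c E ≤ 2 * setCost c E := by
  classical
  have := Fintype.ofFinite V
  set F := (Set.toFinite E).toFinset
  have hcard : ∀ e : Sym2 V, #{v | v ∈ e} ≤ 2 := fun e => by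
    rw [show ({v | v ∈ e} : Finset V) = e.toFinset by ext; simp, Sym2.card_toFinset]
    split_ifs <;> norm_num
  calc setPower c E = ∑ v, vertexPower c E v := finsum_eq_sum_of_fintype _
    _ ≤ ∑ v, ∑ e ∈ F with v ∈ e, c e := Finset.sum_le_sum fun v _ => vertexPower_le c
          fun e he hv => Finset.single_le_sum (fun _ _ => zero_le) (by simpa [F] using ⟨he, hv⟩)
    _ = ∑ e ∈ F, #{v | v ∈ e} • c e := by
          rw [Finset.sum_comm' (t' := F) (s' := fun e => {v | v ∈ e}) (by simp; tauto)]
          simp only [Finset.sum_const]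
    _ ≤ ∑ e ∈ F, 2 * c e := Finset.sum_le_sum fun e _ => by
          rw [nsmul_eq_mul]; gcongr; exact_mod_cast hcard e
    _ = 2 * setCost c E := by
          rw [← Finset.mul_sum, setCost, finsum_mem_eq_finite_toFinset_sum]

lemma setCost_le_setPower_of_injOn [Finite V] {g : Sym2 V → V} (hg : ∀ e ∈ E, g e ∈ e)
    (hinj : E.InjOn g) : setCost c E ≤ setPower c E := by
  classical
  have := Fintype.ofFinite V
  set F := (Set.toFinite E).toFinset
  calc setCost c E = ∑ e ∈ F, c e := finsum_mem_eq_finite_toFinset_sum _ _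
    _ ≤ ∑ e ∈ F, vertexPower c E (g e) := Finset.sum_le_sum fun e he =>
          le_vertexPower c (by simpa [F] using he) (hg e (by simpa [F] using he))
    _ = ∑ v ∈ F.image g, vertexPower c E v :=
          (Finset.sum_image fun e he e' he' =>
            hinj (by simpa [F] using he) (by simpa [F] using he')).symm
    _ ≤ ∑ v, vertexPower c E v := Finset.sum_le_sum_of_subset (Finset.subset_univ _)
    _ = setPower c E := (finsum_eq_sum_of_fintype _).symm

end Power

namespace SimpleGraph

variable {V : Type*} {G : SimpleGraph V}

lemma IsAcyclic.eq_of_adj_of_dist_lt (hG : G.IsAcyclic) {u v w₁ w₂ : V}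
    (hreach : G.Reachable u v) (h₁ : G.Adj v w₁) (h₂ : G.Adj v w₂) (hd₁ : G.dist u w₁ < G.dist u v)
    (hd₂ : G.dist u w₂ < G.dist u v) : w₁ = w₂ := by
  classical
  obtain ⟨p, hp, hpl⟩ := hreach.exists_path_of_dist
  have eq_penultimate : ∀ w, G.Adj v w → G.dist u w < G.dist u v → w = p.penultimate := by
    intro w hadj hd
    obtain ⟨q, hq, hql⟩ := (hreach.trans hadj.reachable).exists_path_of_dist
    have hv : v ∉ q.support := fun hv => by
      have := (dist_le (q.takeUntil v hv)).trans (q.length_takeUntil_le_length hv)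
      omega
    exact hG.eq_penultimate_of_adj_end hp hadj
      (hG.mem_support_of_ne_mem_support_of_adj_of_isPath hp hq hadj hv)
  exact (eq_penultimate _ h₁ hd₁).trans (eq_penultimate _ h₂ hd₂).symm

lemma IsAcyclic.exists_injOn_edgeSet_mem (hG : G.IsAcyclic) :
    ∃ g : Sym2 V → V, (∀ e ∈ G.edgeSet, g e ∈ e) ∧ G.edgeSet.InjOn g := by
  let root : V → V := fun v => Quot.out (G.connectedComponentMk v)
  have reachable_root : ∀ v, G.Reachable (root v) v := fun v =>
    ConnectedComponent.exact (Quot.out_eq _)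
  have root_eq : ∀ {v w}, G.Adj v w → root w = root v := fun h => by
    simp only [root, ConnectedComponent.eq.2 h.reachable]
  let height : V → ℕ := fun v => G.dist (root v) v
  have : ∀ e : Sym2 V, ∃ v ∈ e, ∀ w ∈ e, height w ≤ height v := by
    refine Sym2.ind fun a b => ?_
    rcases le_total (height a) (height b) with h | h
    · exact ⟨b, by simp, by simpa⟩
    · exact ⟨a, by simp, by simpa⟩
  choose g hg hmax using this
  have parent : ∀ e ∈ G.edgeSet, ∃ w, e = s(g e, w) ∧ G.Adj (g e) w ∧
      G.dist (root (g e)) w < G.dist (root (g e)) (g e) := by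
    intro e he
    obtain ⟨w, hw⟩ := Sym2.mem_iff_exists.1 (hg e)
    have hadj : G.Adj (g e) w := by rwa [hw] at he
    refine ⟨w, hw, hadj, lt_of_le_of_ne ?_ ?_⟩
    · have := hmax e w (hw ▸ Sym2.mem_mk_right _ _)
      simpa only [height, root_eq hadj] using this
    · exact (hG.dist_ne_of_adj hadj (reachable_root _)).symm
  refine ⟨g, fun e _ => hg e, fun e₁ he₁ e₂ he₂ heq => ?_⟩
  obtain ⟨w₁, hw₁, hadj₁, hd₁⟩ := parent e₁ he₁
  obtain ⟨w₂, hw₂, hadj₂, hd₂⟩ := parent e₂ he₂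
  rw [← heq] at hadj₂ hd₂ hw₂
  rw [hw₁, hw₂, hG.eq_of_adj_of_dist_lt (reachable_root _) hadj₁ hadj₂ hd₁ hd₂]

lemma IsAcyclic.setCost_le_setPower [Finite V] (hG : G.IsAcyclic) (c : Sym2 V → ℝ≥0) :
    setCost c G.edgeSet ≤ setPower c G.edgeSet := by
  obtain ⟨_, hg, hinj⟩ := hG.exists_injOn_edgeSet_mem
  exact setCost_le_setPower_of_injOn c hg hinj

lemma Subgraph.setCost_le_setPower [Finite V] {S : G.Subgraph} (hS : S.coe.IsAcyclic)
    (c : Sym2 V → ℝ≥0) : setCost c S.edgeSet ≤ setPower c S.edgeSet := by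
  rw [← S.image_coe_edgeSet_coe, setCost_image_sym2Map c Subtype.val_injective,
    setPower_image_sym2Map c Subtype.val_injective]
  exact hS.setCost_le_setPower _

end SimpleGraph

theorem stmt_1_general {V : Type*} [Fintype V] (G : SimpleGraph V) (c : Sym2 V → ℝ≥0)
    (R : Set V) (ρ : ℝ) (hρ : 1 ≤ ρ)
    (S : G.Subgraph)
    (happrox : ∀ S' : G.Subgraph, IsSteinerTree G R S' →
      (setCost c S.edgeSet : ℝ) ≤ ρ * (setCost c S'.edgeSet : ℝ)) :
    ∀ S'' : G.Subgraph, IsSteinerTree G R S'' →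
      (setPower c S.edgeSet : ℝ) ≤ 2 * ρ * (setPower c S''.edgeSet : ℝ) := by
  intro S'' hS''
  have power_le : (setPower c S.edgeSet : ℝ) ≤ 2 * setCost c S.edgeSet := by
    exact_mod_cast setPower_le_two_mul_setCost c S.edgeSet
  have cost_le : (setCost c S''.edgeSet : ℝ) ≤ setPower c S''.edgeSet := by
    exact_mod_cast S''.setCost_le_setPower hS''.1.isAcyclic c
  calc (setPower c S.edgeSet : ℝ) ≤ 2 * setCost c S.edgeSet := power_le
    _ ≤ 2 * (ρ * setCost c S''.edgeSet) := by gcongr; exact happrox S'' hS''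
    _ ≤ 2 * ρ * setPower c S''.edgeSet := by
      rw [← mul_assoc]; exact mul_le_mul_of_nonneg_left cost_le (by linarith)

/-- If `S` is a Steiner tree for `R` whose cost is at most `ρ` times the cost of every
Steiner tree for `R` (with `ρ ≥ 1`), then the power of `S` is at most `2ρ` times the power
of every Steiner tree for `R`. -/
theorem stmt_1 {V : Type*} [Fintype V] (G : SimpleGraph V) (c : Sym2 V → ℝ≥0)
    (R : Set V) (ρ : ℝ) (hρ : 1 ≤ ρ)
    (S : G.Subgraph) (hS : IsSteinerTree G R S)
    (happrox : ∀ S' : G.Subgraph, IsSteinerTree G R S' →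
      (setCost c S.edgeSet : ℝ) ≤ ρ * (setCost c S'.edgeSet : ℝ)) :
    ∀ S'' : G.Subgraph, IsSteinerTree G R S'' →
      (setPower c S.edgeSet : ℝ) ≤ 2 * ρ * (setPower c S''.edgeSet : ℝ) :=
  stmt_1_general G c R ρ hρ S happrox
end

section
/- For every integer i ≥ 0, δ_i < δ_{i+1}; that is, the sequence (δ_i)_{i≥0} is strictly increasing (note δ_0 = 0). -/
/-- The `n`-th harmonic number `H_n = ∑_{j=1}^n 1/j` (with `H 0 = 0`). -/
noncomputable def H (n : ℕ) : ℝ := ∑ j ∈ Finset.Icc 1 n, (1 : ℝ) / (j : ℝ)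

/-- `δ_i = (1/2^i)·H_i + (1 − 1/2^i)·∑_{q=1}^∞ H_{q+i}/2^q`. -/
noncomputable def δ (i : ℕ) : ℝ :=
  (1 / 2 ^ i) * H i + (1 - 1 / 2 ^ i) * ∑' q : ℕ, H (q + 1 + i) / 2 ^ (q + 1)

/-!
Write `a = 2^{-(i+1)}`, `S_i = ∑_{q ≥ 1} f_{q+i}/2^q` and `δ_i = 2a f_i + (1 - 2a) S_i` for any
increasing sequence `f`. Since the weights `2^{-q}` sum to one, `S_i ≥ f_i`, and `S_{i+1} ≥ S_i`
termwise. The identity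
`δ_{i+1} - δ_i = a (f_{i+1} - f_i) + a (S_i - f_i) + (1 - a) (S_{i+1} - S_i)`
then shows `δ_i < δ_{i+1}` as soon as `f` is strictly increasing; the harmonic numbers are, and
they grow slowly enough (`H_n ≤ n`) for all the series to converge.
-/

open Finset

noncomputable def geomTailAvg (f : ℕ → ℝ) (i : ℕ) : ℝ :=
  ∑' q : ℕ, f (q + 1 + i) / 2 ^ (q + 1)

noncomputable def geomMix (f : ℕ → ℝ) (i : ℕ) : ℝ :=
  (1 / 2 ^ i) * f i + (1 - 1 / 2 ^ i) * geomTailAvg f i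

section GeomTail

variable {f : ℕ → ℝ}

theorem summable_geomTail (hs : Summable fun n => f n / 2 ^ n) (i : ℕ) :
    Summable fun q : ℕ => f (q + 1 + i) / 2 ^ (q + 1) := by
  refine (((summable_nat_add_iff (1 + i)).2 hs).mul_left (2 ^ i)).congr fun q => ?_
  rw [← add_assoc, pow_add _ (q + 1) i]
  field_simp

theorem le_geomTailAvg (hf : Monotone f) (hs : Summable fun n => f n / 2 ^ n) (i : ℕ) :
    f i ≤ geomTailAvg f i := by
  have hgeom : ∀ q : ℕ, f i / 2 / 2 ^ q = f i / 2 ^ (q + 1) := fun q => by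
    rw [pow_succ]; ring
  calc f i = ∑' q : ℕ, f i / 2 ^ (q + 1) := by simp only [← hgeom, tsum_geometric_two']
    _ ≤ geomTailAvg f i :=
      Summable.tsum_le_tsum (fun q => by gcongr; exact hf (by omega))
        ((summable_geometric_two' (f i)).congr hgeom) (summable_geomTail hs i)

theorem geomTailAvg_le_succ (hf : Monotone f) (hs : Summable fun n => f n / 2 ^ n) (i : ℕ) :
    geomTailAvg f i ≤ geomTailAvg f (i + 1) :=
  Summable.tsum_le_tsum (fun q => by gcongr; exact hf (by omega))
    (summable_geomTail hs i) (summable_geomTail hs (i + 1))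

theorem strictMono_geomMix (hf : StrictMono f) (hs : Summable fun n => f n / 2 ^ n) :
    StrictMono (geomMix f) := by
  refine strictMono_nat_of_lt_succ fun i => ?_
  set a : ℝ := 1 / 2 ^ (i + 1)
  have ha : 0 < a := by positivity
  have ha_le : a ≤ 1 := div_le_one_of_le₀ (one_le_pow₀ one_le_two) (by positivity)
  have h2a : (1 : ℝ) / 2 ^ i = 2 * a := by simp only [a, pow_succ]; ring
  have hstep := hf (Nat.lt_succ_self i)
  have hfS := le_geomTailAvg hf.monotone hs i
  have hSS := geomTailAvg_le_succ hf.monotone hs i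
  unfold geomMix
  rw [h2a]
  nlinarith [mul_pos ha (sub_pos.2 hstep), mul_nonneg ha.le (sub_nonneg.2 hfS),
    mul_nonneg (sub_nonneg.2 ha_le) (sub_nonneg.2 hSS)]

end GeomTail

theorem H_succ (n : ℕ) : H (n + 1) = H n + 1 / (n + 1) := by
  rw [H, sum_Icc_succ_top (by omega), ← H]
  push_cast; ring

theorem H_strictMono : StrictMono H :=
  strictMono_nat_of_lt_succ fun n => by
    rw [H_succ]; linarith [Nat.one_div_pos_of_nat (α := ℝ) (n := n)]

theorem H_nonneg (n : ℕ) : 0 ≤ H n := by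
  unfold H; positivity

theorem H_le_natCast (n : ℕ) : H n ≤ n := by
  induction n with
  | zero => simp [H]
  | succ n ih =>
    rw [H_succ]; push_cast
    have : (1 : ℝ) / (n + 1) ≤ 1 :=
      div_le_one_of_le₀ (by linarith [n.cast_nonneg (α := ℝ)]) (by positivity)
    linarith

theorem summable_H_div_two_pow : Summable fun n => H n / 2 ^ n := by
  have hlin : Summable fun n : ℕ => (n : ℝ) ^ 1 * (1 / 2 : ℝ) ^ n :=
    summable_pow_mul_geometric_of_norm_lt_one 1 (by norm_num)
  refine Summable.of_nonneg_of_le (fun n => by have := H_nonneg n; positivity) (fun n => ?_) hlin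
  rw [pow_one, div_pow, one_pow, mul_one_div]
  gcongr
  exact H_le_natCast n

/-- For every integer `i ≥ 0`, `δ_i < δ_{i+1}`: the sequence `(δ_i)` is strictly
increasing (note `δ 0 = 0`). -/
theorem stmt_16 (i : ℕ) : δ i < δ (i + 1) :=
  strictMono_geomMix H_strictMono summable_H_div_two_pow (Nat.lt_succ_self i)
end
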